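/- For every ρ₊ > 0 there exists a constant c > 0 (depending only on ρ₊, Γ₋, Γ₊ and g) such that the following holds: for every ρ ∈ [0, ρ₊] and φ ≥ 0 with R(φ) = ρ, every ε ∈ (0,1], every n ∈ ℕ, and every family X₁, …, Xₙ of independent random variables each with distribution ν_φ, one has P[Σ_{k=1}^n X_k ≤ (ρ − ε)n] ≤ e^{−c ε² n}. -/

import Mathlib

/-!
Since `g(k)! ≥ Γ₋ᵏ k!`, the second moment of `ν_φ` is at most
`∑ k² (φ/Γ₋)ᵏ / k! ≤ exp (4φ/Γ₋)`.
Comparing consecutive terms of the two series through `g(k+1) ≤ Γ₊ (k+1)` gives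
`φ Z(φ) ≤ Γ₊ R(φ) Z(φ)`, so `φ ≤ Γ₊ ρ₊` and the second moment is bounded by
`M = exp (4 Γ₊ ρ₊ / Γ₋)` uniformly over the admissible `φ`. For a nonnegative variable,
`e^{-x} ≤ 1 - x + x²` gives `E e^{-tX} ≤ exp (-t ρ + t² M)`, and the Chernoff bound with
`t = ε / (2M)` yields `e^{-ε² n / (4M)}`.
-/

open MeasureTheory ProbabilityTheory

/-- The "generalized factorial" `g(k)! = g(k) ⋯ g(1)`, with `g(0)! = 1`. -/
noncomputable def gFact (g : ℕ → ℝ) : ℕ → ℝ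
  | 0 => 1
  | n + 1 => g (n + 1) * gFact g n

/-- The partition function `Z(φ) = Σ_{k=0}^∞ φ^k / g(k)!`. -/
noncomputable def Zfun (g : ℕ → ℝ) (φ : ℝ) : ℝ := ∑' k : ℕ, φ ^ k / gFact g k

/-- The measure `ν_φ` on `ℕ`, given by `ν_φ(k) = φ^k / (g(k)!·Z(φ))`.
For `φ = 0` this is the Dirac mass at `0`. -/
noncomputable def nuMeasure (g : ℕ → ℝ) (φ : ℝ) : Measure ℕ :=
  Measure.sum fun k =>
    (ENNReal.ofReal (φ ^ k / (gFact g k * Zfun g φ))) • Measure.dirac k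

/-- The mean `R(φ) = (1/Z(φ)) Σ_{k=0}^∞ k φ^k / g(k)!` of `ν_φ`. -/
noncomputable def Rfun (g : ℕ → ℝ) (φ : ℝ) : ℝ :=
  (∑' k : ℕ, (k : ℝ) * φ ^ k / gFact g k) / Zfun g φ

open Real

section Growth

variable {g : ℕ → ℝ} {Γm Γp φ : ℝ}

lemma mul_le_of_le_sub_succ (hg0 : g 0 = 0) (h : ∀ k, Γm ≤ g (k + 1) - g k) (k : ℕ) :
    Γm * k ≤ g k := by
  induction k with
  | zero => simp [hg0]
  | succ k ih => push_cast; linarith [h k]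

lemma le_mul_of_sub_succ_le (hg0 : g 0 = 0) (h : ∀ k, g (k + 1) - g k ≤ Γp) (k : ℕ) :
    g k ≤ Γp * k := by
  induction k with
  | zero => simp [hg0]
  | succ k ih => push_cast; linarith [h k]

lemma pow_mul_factorial_le_gFact (hΓm : 0 ≤ Γm) (hlow : ∀ k, Γm * k ≤ g k) (k : ℕ) :
    Γm ^ k * k.factorial ≤ gFact g k := by
  induction k with
  | zero => simp [gFact]
  | succ k ih =>
    calc Γm ^ (k + 1) * (k + 1).factorial = (Γm * (k + 1 : ℕ)) * (Γm ^ k * k.factorial) := by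
          push_cast [Nat.factorial_succ]; ring
      _ ≤ g (k + 1) * gFact g k :=
          mul_le_mul (hlow _) ih (by positivity)
            ((by positivity : (0 : ℝ) ≤ Γm * (k + 1 : ℕ)).trans (hlow _))

lemma gFact_pos (hΓm : 0 < Γm) (hlow : ∀ k, Γm * k ≤ g k) (k : ℕ) : 0 < gFact g k :=
  lt_of_lt_of_le (by positivity) (pow_mul_factorial_le_gFact hΓm.le hlow k)

lemma pow_div_gFact_le (hΓm : 0 < Γm) (hlow : ∀ k, Γm * k ≤ g k) (hφ : 0 ≤ φ) (k : ℕ) :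
    φ ^ k / gFact g k ≤ (φ / Γm) ^ k / k.factorial := by
  rw [div_pow, div_div]
  gcongr
  exact pow_mul_factorial_le_gFact hΓm.le hlow k

lemma natCast_sq_le_four_pow (k : ℕ) : (k : ℝ) ^ 2 ≤ 4 ^ k := by
  have h : k ^ 2 ≤ (2 ^ k) ^ 2 := Nat.pow_le_pow_left Nat.lt_two_pow_self.le 2
  rw [← pow_mul, mul_comm, pow_mul] at h
  exact_mod_cast h

lemma sq_mul_pow_div_gFact_le (hΓm : 0 < Γm) (hlow : ∀ k, Γm * k ≤ g k) (hφ : 0 ≤ φ)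
    (k : ℕ) : (k : ℝ) ^ 2 * (φ ^ k / gFact g k) ≤ (4 * φ / Γm) ^ k / k.factorial :=
  calc (k : ℝ) ^ 2 * (φ ^ k / gFact g k) ≤ 4 ^ k * ((φ / Γm) ^ k / k.factorial) :=
        mul_le_mul (natCast_sq_le_four_pow k) (pow_div_gFact_le hΓm hlow hφ k)
          (div_nonneg (pow_nonneg hφ k) (gFact_pos hΓm hlow k).le) (by positivity)
    _ = (4 * φ / Γm) ^ k / k.factorial := by rw [mul_div_assoc, mul_pow, mul_div_assoc]

lemma summable_pow_div_gFact (hΓm : 0 < Γm) (hlow : ∀ k, Γm * k ≤ g k) (hφ : 0 ≤ φ) :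
    Summable fun k => φ ^ k / gFact g k :=
  .of_nonneg_of_le (fun k => div_nonneg (pow_nonneg hφ k) (gFact_pos hΓm hlow k).le)
    (pow_div_gFact_le hΓm hlow hφ) (Real.summable_pow_div_factorial _)

lemma summable_sq_mul_pow_div_gFact (hΓm : 0 < Γm) (hlow : ∀ k, Γm * k ≤ g k) (hφ : 0 ≤ φ) :
    Summable fun k : ℕ => (k : ℝ) ^ 2 * (φ ^ k / gFact g k) :=
  .of_nonneg_of_le
    (fun k => mul_nonneg (sq_nonneg _) (div_nonneg (pow_nonneg hφ k) (gFact_pos hΓm hlow k).le))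
    (sq_mul_pow_div_gFact_le hΓm hlow hφ) (Real.summable_pow_div_factorial _)

lemma tsum_sq_mul_pow_div_gFact_le (hΓm : 0 < Γm) (hlow : ∀ k, Γm * k ≤ g k) (hφ : 0 ≤ φ) :
    ∑' k : ℕ, (k : ℝ) ^ 2 * (φ ^ k / gFact g k) ≤ exp (4 * φ / Γm) := by
  rw [exp_eq_exp_ℝ, ← (NormedSpace.expSeries_div_hasSum_exp _).tsum_eq]
  exact (summable_sq_mul_pow_div_gFact hΓm hlow hφ).tsum_le_tsum
    (sq_mul_pow_div_gFact_le hΓm hlow hφ) (Real.summable_pow_div_factorial _)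

lemma one_le_Zfun (hΓm : 0 < Γm) (hlow : ∀ k, Γm * k ≤ g k) (hφ : 0 ≤ φ) : 1 ≤ Zfun g φ := by
  simpa [Zfun, gFact] using (summable_pow_div_gFact hΓm hlow hφ).le_tsum 0
    fun k _ => div_nonneg (pow_nonneg hφ k) (gFact_pos hΓm hlow k).le

end Growth

lemma le_mul_Rfun {g : ℕ → ℝ} {Γm Γp φ : ℝ} (hΓm : 0 < Γm) (hlow : ∀ k, Γm * k ≤ g k)
    (hup : ∀ k, g k ≤ Γp * k) (hφ : 0 ≤ φ) : φ ≤ Γp * Rfun g φ := by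
  have hG := gFact_pos hΓm hlow
  have hN : Summable fun k : ℕ => (k : ℝ) * φ ^ k / gFact g k := by
    refine .of_nonneg_of_le (fun k => by have := hG k; positivity) (fun k => ?_)
      (summable_sq_mul_pow_div_gFact hΓm hlow hφ)
    rw [mul_div_assoc]
    exact mul_le_mul_of_nonneg_right (mod_cast Nat.le_self_pow two_ne_zero k)
      (div_nonneg (pow_nonneg hφ k) (hG k).le)
  have hterm : ∀ k : ℕ, φ * (φ ^ k / gFact g k) ≤
      Γp * ((k + 1 : ℕ) * φ ^ (k + 1) / gFact g (k + 1)) := by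
    intro k
    have hg : 0 < g (k + 1) := (by positivity : (0 : ℝ) < Γm * (k + 1 : ℕ)).trans_le (hlow _)
    have hGk := hG k
    calc φ * (φ ^ k / gFact g k) = g (k + 1) * φ ^ (k + 1) / (g (k + 1) * gFact g k) := by
          field_simp; ring
      _ ≤ Γp * (k + 1 : ℕ) * φ ^ (k + 1) / (g (k + 1) * gFact g k) := by gcongr; exact hup _
      _ = Γp * ((k + 1 : ℕ) * φ ^ (k + 1) / gFact g (k + 1)) := by rw [gFact]; ring
  have hmul : φ * Zfun g φ ≤ Γp * ∑' k : ℕ, (k : ℝ) * φ ^ k / gFact g k := by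
    rw [hN.tsum_eq_zero_add, Zfun]
    simp only [CharP.cast_eq_zero, zero_mul, zero_div, zero_add]
    rw [← tsum_mul_left, ← tsum_mul_left]
    exact ((summable_pow_div_gFact hΓm hlow hφ).mul_left φ).tsum_le_tsum hterm
      (((summable_nat_add_iff 1).2 hN).mul_left Γp)
  rwa [Rfun, ← mul_div_assoc, le_div_iff₀ ((one_le_Zfun hΓm hlow hφ).trans_lt' one_pos)]

section Nu

variable {g : ℕ → ℝ} {Γm φ : ℝ}

lemma nuMeasure_weight_nonneg (hΓm : 0 < Γm) (hlow : ∀ k, Γm * k ≤ g k) (hφ : 0 ≤ φ) (k : ℕ) :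
    0 ≤ φ ^ k / (gFact g k * Zfun g φ) := by
  have := gFact_pos hΓm hlow k
  have := one_le_Zfun hΓm hlow hφ
  positivity

lemma isProbabilityMeasure_nuMeasure (hΓm : 0 < Γm) (hlow : ∀ k, Γm * k ≤ g k) (hφ : 0 ≤ φ) :
    IsProbabilityMeasure (nuMeasure g φ) := by
  refine HasSum.isProbabilityMeasure_sum_dirac (nuMeasure_weight_nonneg hΓm hlow hφ) ?_
  have hZ : Zfun g φ ≠ 0 := ((one_le_Zfun hΓm hlow hφ).trans_lt' one_pos).ne'
  have h := (summable_pow_div_gFact hΓm hlow hφ).hasSum.div_const (Zfun g φ)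
  simp_rw [div_div] at h
  rwa [← Zfun, div_self hZ] at h

lemma integral_nuMeasure (hΓm : 0 < Γm) (hlow : ∀ k, Γm * k ≤ g k) (hφ : 0 ≤ φ) (f : ℕ → ℝ) :
    ∫ k, f k ∂nuMeasure g φ = (∑' k, f k * (φ ^ k / gFact g k)) / Zfun g φ := by
  rw [nuMeasure, integral_sum_dirac (by simp), ← tsum_div_const]
  congr with k
  rw [ENNReal.toReal_ofReal (nuMeasure_weight_nonneg hΓm hlow hφ k), smul_eq_mul]
  ring

lemma integral_natCast_nuMeasure (hΓm : 0 < Γm) (hlow : ∀ k, Γm * k ≤ g k) (hφ : 0 ≤ φ) :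
    ∫ k, (k : ℝ) ∂nuMeasure g φ = Rfun g φ := by
  simp_rw [integral_nuMeasure hΓm hlow hφ, Rfun, mul_div_assoc]

lemma integral_sq_nuMeasure_le (hΓm : 0 < Γm) (hlow : ∀ k, Γm * k ≤ g k) (hφ : 0 ≤ φ) :
    ∫ k, (k : ℝ) ^ 2 ∂nuMeasure g φ ≤ exp (4 * φ / Γm) := by
  rw [integral_nuMeasure hΓm hlow hφ]
  refine (div_le_self ?_ (one_le_Zfun hΓm hlow hφ)).trans
    (tsum_sq_mul_pow_div_gFact_le hΓm hlow hφ)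
  exact tsum_nonneg fun k => mul_nonneg (sq_nonneg _)
    (div_nonneg (pow_nonneg hφ k) (gFact_pos hΓm hlow k).le)

lemma integrable_sq_nuMeasure (hΓm : 0 < Γm) (hlow : ∀ k, Γm * k ≤ g k) (hφ : 0 ≤ φ) :
    Integrable (fun k : ℕ => (k : ℝ) ^ 2) (nuMeasure g φ) := by
  rw [nuMeasure, integrable_sum_dirac_iff (by simp)]
  refine ((summable_sq_mul_pow_div_gFact hΓm hlow hφ).div_const (Zfun g φ)).congr fun k => ?_
  rw [ENNReal.toReal_ofReal (nuMeasure_weight_nonneg hΓm hlow hφ k),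
    Real.norm_of_nonneg (sq_nonneg _)]
  ring

lemma integrable_natCast_nuMeasure (hΓm : 0 < Γm) (hlow : ∀ k, Γm * k ≤ g k) (hφ : 0 ≤ φ) :
    Integrable (fun k : ℕ => (k : ℝ)) (nuMeasure g φ) :=
  (integrable_sq_nuMeasure hΓm hlow hφ).mono' measurable_from_nat.aestronglyMeasurable
    (ae_of_all _ fun k => by simpa using (mod_cast Nat.le_self_pow two_ne_zero k : (k : ℝ) ≤ k ^ 2))

end Nu

lemma Real.exp_neg_le_one_sub_add_sq {x : ℝ} (hx : 0 ≤ x) : exp (-x) ≤ 1 - x + x ^ 2 := by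
  have hq : 0 ≤ 1 - x + x ^ 2 := by nlinarith [sq_nonneg (x - 1)]
  rw [exp_neg, inv_le_iff_one_le_mul₀' (exp_pos x)]
  -- `(1 + x)(1 - x + x²) = 1 + x³`
  calc 1 ≤ (x + 1) * (1 - x + x ^ 2) := by nlinarith [pow_nonneg hx 3]
    _ ≤ exp x * (1 - x + x ^ 2) := mul_le_mul_of_nonneg_right (add_one_le_exp x) hq

section Chernoff

variable {Ω : Type*} {mΩ : MeasurableSpace Ω} {μ : Measure Ω} {X : Ω → ℝ} {t : ℝ}

lemma integrable_exp_neg_mul_of_nonneg [IsFiniteMeasure μ] (hXm : AEMeasurable X μ)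
    (hX : 0 ≤ᵐ[μ] X) (ht : 0 ≤ t) : Integrable (fun ω => exp (-t * X ω)) μ := by
  refine .of_mem_Icc 0 1 (by fun_prop) ?_
  filter_upwards [hX] with ω hω
  have := mul_nonneg ht hω
  exact ⟨(exp_pos _).le, exp_le_one_iff.2 (by linarith)⟩

lemma mgf_neg_le_of_nonneg [IsProbabilityMeasure μ] (hX : 0 ≤ᵐ[μ] X) (hX1 : Integrable X μ)
    (hX2 : Integrable (fun ω => X ω ^ 2) μ) (ht : 0 ≤ t) :
    mgf X μ (-t) ≤ exp (-t * μ[X] + t ^ 2 * μ[fun ω => X ω ^ 2]) := by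
  have hlin : Integrable (fun ω => 1 - t * X ω) μ := (integrable_const 1).sub (hX1.const_mul t)
  have hsq : Integrable (fun ω => t ^ 2 * X ω ^ 2) μ := hX2.const_mul (t ^ 2)
  calc mgf X μ (-t) ≤ ∫ ω, 1 - t * X ω + t ^ 2 * X ω ^ 2 ∂μ := by
        refine integral_mono_ae (integrable_exp_neg_mul_of_nonneg hX1.aemeasurable hX ht)
          (hlin.add hsq) ?_
        filter_upwards [hX] with ω hω
        rw [neg_mul]
        exact (Real.exp_neg_le_one_sub_add_sq (mul_nonneg ht hω)).trans_eq (by ring)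
    _ = 1 + (-t * μ[X] + t ^ 2 * μ[fun ω => X ω ^ 2]) := by
        rw [integral_add hlin hsq, integral_sub (integrable_const 1) (hX1.const_mul t),
          integral_const_mul, integral_const_mul]
        simp only [integral_const, probReal_univ, smul_eq_mul, one_mul]
        ring
    _ ≤ exp (-t * μ[X] + t ^ 2 * μ[fun ω => X ω ^ 2]) := by
        rw [add_comm]
        exact add_one_le_exp _

lemma measure_sum_le_le_of_mgf_neg_le {ι : Type*} [Fintype ι] [IsProbabilityMeasure μ]
    {X : ι → Ω → ℝ} (hind : iIndepFun X μ) (hXm : ∀ i, Measurable (X i))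
    (hX : ∀ i, 0 ≤ᵐ[μ] X i) {ρ M ε : ℝ} (hM : 0 < M) (hε : 0 ≤ ε)
    (hmgf : ∀ i t, 0 ≤ t → mgf (X i) μ (-t) ≤ exp (-t * ρ + t ^ 2 * M)) :
    μ {ω | ∑ i, X i ω ≤ (ρ - ε) * Fintype.card ι} ≤
      ENNReal.ofReal (exp (-(4 * M)⁻¹ * ε ^ 2 * Fintype.card ι)) := by
  set n := Fintype.card ι
  -- the Chernoff exponent `n (-t ε + t² M)` is minimised at this `t`
  set t := ε / (2 * M) with ht_def
  have ht : 0 ≤ t := by positivity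
  have hint : Integrable (fun ω => exp (-t * (∑ i, X i) ω)) μ :=
    hind.integrable_exp_mul_sum hXm fun i _ =>
      integrable_exp_neg_mul_of_nonneg (hXm i).aemeasurable (hX i) ht
  have hprod : ∏ i, mgf (X i) μ (-t) ≤ exp (-t * ρ + t ^ 2 * M) ^ n :=
    calc ∏ i, mgf (X i) μ (-t) ≤ ∏ _i : ι, exp (-t * ρ + t ^ 2 * M) :=
          Finset.prod_le_prod (fun _ _ => mgf_nonneg) fun i _ => hmgf i t ht
      _ = exp (-t * ρ + t ^ 2 * M) ^ n := by simp [n]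
  rw [ENNReal.le_ofReal_iff_toReal_le (measure_ne_top _ _) (exp_pos _).le, ← measureReal_def]
  calc μ.real {ω | ∑ i, X i ω ≤ (ρ - ε) * n}
      ≤ exp (-(-t) * ((ρ - ε) * n)) * mgf (∑ i, X i) μ (-t) := by
        simpa only [Finset.sum_apply] using
          measure_le_le_exp_mul_mgf ((ρ - ε) * n) (neg_nonpos.2 ht) hint
    _ ≤ exp (t * ((ρ - ε) * n)) * exp (-t * ρ + t ^ 2 * M) ^ n := by
        rw [neg_neg, hind.mgf_sum hXm]
        gcongr
    _ = exp (-(4 * M)⁻¹ * ε ^ 2 * n) := by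
        rw [← exp_nat_mul, ← exp_add, ht_def]
        congr 1
        field_simp
        ring

end Chernoff

lemma mgf_natCast_nuMeasure_neg_le {g : ℕ → ℝ} {Γm φ t : ℝ} (hΓm : 0 < Γm)
    (hlow : ∀ k, Γm * k ≤ g k) (hφ : 0 ≤ φ) (ht : 0 ≤ t) :
    mgf (fun k : ℕ => (k : ℝ)) (nuMeasure g φ) (-t) ≤
      exp (-t * Rfun g φ + t ^ 2 * exp (4 * φ / Γm)) := by
  have := isProbabilityMeasure_nuMeasure hΓm hlow hφ
  refine (mgf_neg_le_of_nonneg (ae_of_all _ fun k => k.cast_nonneg)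
    (integrable_natCast_nuMeasure hΓm hlow hφ) (integrable_sq_nuMeasure hΓm hlow hφ) ht).trans ?_
  rw [integral_natCast_nuMeasure hΓm hlow hφ]
  gcongr
  exact integral_sq_nuMeasure_le hΓm hlow hφ

theorem zrp_concentration_lower_general
    (g : ℕ → ℝ) (Γm Γp : ℝ)
    (hΓm : 0 < Γm)
    (hg0 : g 0 = 0)
    (hg : ∀ k : ℕ, 1 ≤ k → Γm ≤ g k - g (k - 1) ∧ g k - g (k - 1) ≤ Γp)
    (ρp : ℝ) :
    ∃ c : ℝ, 0 < c ∧
      ∀ ρ : ℝ, ρ ∈ Set.Icc 0 ρp → ∀ φ : ℝ, 0 ≤ φ → Rfun g φ = ρ →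
      ∀ ε : ℝ, ε ∈ Set.Ioc (0 : ℝ) 1 → ∀ n : ℕ,
      ∀ (Ω : Type) (_ : MeasurableSpace Ω) (P : Measure Ω), IsProbabilityMeasure P →
      ∀ X : Fin n → Ω → ℕ, (∀ i, Measurable (X i)) →
        iIndepFun X P →
        (∀ i, Measure.map (X i) P = nuMeasure g φ) →
        P {ω | ∑ i, (X i ω : ℝ) ≤ (ρ - ε) * n} ≤
          ENNReal.ofReal (Real.exp (-c * ε ^ 2 * n)) := by
  have hlow : ∀ k, Γm * k ≤ g k :=
    mul_le_of_le_sub_succ hg0 fun k => by simpa using (hg (k + 1) k.succ_pos).1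
  have hup : ∀ k, g k ≤ Γp * k :=
    le_mul_of_sub_succ_le hg0 fun k => by simpa using (hg (k + 1) k.succ_pos).2
  have hΓp : 0 ≤ Γp := by
    have h := (hlow 1).trans (hup 1)
    rw [Nat.cast_one, mul_one, mul_one] at h
    linarith
  set M := exp (4 * (Γp * ρp) / Γm)
  refine ⟨(4 * M)⁻¹, by positivity, ?_⟩
  rintro _ ⟨-, hρ⟩ φ hφ rfl ε ⟨hε, -⟩ n Ω _ P _ X hXm hind hX
  have hφρ : φ ≤ Γp * ρp := (le_mul_Rfun hΓm hlow hup hφ).trans (by gcongr)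
  have hM : exp (4 * φ / Γm) ≤ M := by simp only [M]; gcongr
  have hmgf : ∀ i t, 0 ≤ t →
      mgf (fun ω => (X i ω : ℝ)) P (-t) ≤ exp (-t * Rfun g φ + t ^ 2 * M) := by
    intro i t ht
    rw [← Function.comp_def, ← mgf_map (hXm i).aemeasurable (by fun_prop), hX i]
    exact (mgf_natCast_nuMeasure_neg_le hΓm hlow hφ ht).trans (by gcongr)
  simpa using measure_sum_le_le_of_mgf_neg_le (hind.comp _ fun _ => measurable_from_nat)
    (fun i => measurable_from_nat.comp (hXm i)) (fun i => ae_of_all _ fun ω => (X i ω).cast_nonneg)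
    (by positivity) hε.le hmgf

/-- lower concentration of the invariant measure. -/
theorem zrp_concentration_lower
    (g : ℕ → ℝ) (Γm Γp : ℝ)
    (hΓm : 0 < Γm) (hΓm1 : Γm ≤ 1) (hΓp : 1 ≤ Γp)
    (hg0 : g 0 = 0)
    (hg : ∀ k : ℕ, 1 ≤ k → Γm ≤ g k - g (k - 1) ∧ g k - g (k - 1) ≤ Γp)
    (ρp : ℝ) (hρp : 0 < ρp) :
    ∃ c : ℝ, 0 < c ∧
      ∀ ρ : ℝ, ρ ∈ Set.Icc 0 ρp → ∀ φ : ℝ, 0 ≤ φ → Rfun g φ = ρ →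
      ∀ ε : ℝ, ε ∈ Set.Ioc (0 : ℝ) 1 → ∀ n : ℕ,
      ∀ (Ω : Type) (_ : MeasurableSpace Ω) (P : Measure Ω), IsProbabilityMeasure P →
      ∀ X : Fin n → Ω → ℕ, (∀ i, Measurable (X i)) →
        iIndepFun X P →
        (∀ i, Measure.map (X i) P = nuMeasure g φ) →
        P {ω | ∑ i, (X i ω : ℝ) ≤ (ρ - ε) * n} ≤
          ENNReal.ofReal (Real.exp (-c * ε ^ 2 * n)) :=
  zrp_concentration_lower_general g Γm Γp hΓm hg0 hg ρp
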